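/- arXiv:2406.15120 — 2 statements merged into one kernel-verified Lean document; each statement's English description precedes it below -/
import Mathlib

section
/- Let A ∈ ℝ^{m×n}, U ∈ ℝ^{m×r}, V ∈ ℝ^{n×r} with m ≥ n ≥ r, and assume rank(A) = rank(A + U Vᵀ) = n. Set X = [V, AᵀU], Y = [(A + U Vᵀ)ᵀ U, V], and M = (AᵀA)⁻¹ X (I_{2r} + Yᵀ (AᵀA)⁻¹ X)⁻¹ Yᵀ. Then (A + U Vᵀ)† = A† − M A† + (I − M)(AᵀA)⁻¹ V Uᵀ. -/
open Matrix

/-- `B` is the Moore–Penrose pseudoinverse of `A`. -/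
def IsMoorePenrose {m n : ℕ} (A : Matrix (Fin m) (Fin n) ℝ)
    (B : Matrix (Fin n) (Fin m) ℝ) : Prop :=
  A * B * A = A ∧ B * A * B = B ∧ (A * B)ᵀ = A * B ∧ (B * A)ᵀ = B * A

/-- A square real matrix of full rank is a unit. -/
lemma isUnit_of_rank_eq_card {n : ℕ} (B : Matrix (Fin n) (Fin n) ℝ) (h : B.rank = n) :
    IsUnit B := by
  rw [← Matrix.mulVec_surjective_iff_isUnit]
  have htop : LinearMap.range B.mulVecLin = ⊤ := by
    apply Submodule.eq_top_of_finrank_eq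
    rw [← Matrix.rank, h, Module.finrank_fintype_fun_eq_card, Fintype.card_fin]
  intro y
  have := htop ▸ Submodule.mem_top (x := y) (R := ℝ)
  obtain ⟨x, hx⟩ := this
  exact ⟨x, hx⟩

/-- If `AᵀA` is invertible and `Ad` satisfies the first and third Moore–Penrose
conditions, then `Ad = (AᵀA)⁻¹Aᵀ`. -/
lemma pinv_eq_of_isUnit {m n : ℕ} (A : Matrix (Fin m) (Fin n) ℝ)
    (Ad : Matrix (Fin n) (Fin m) ℝ) (hu : IsUnit (Aᵀ * A))
    (h1 : A * Ad * A = A) (h3 : (A * Ad)ᵀ = A * Ad) :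
    Ad = (Aᵀ * A)⁻¹ * Aᵀ := by
  have hinv : (Aᵀ * A)⁻¹ * (Aᵀ * A) = 1 := nonsing_inv_mul _ (isUnit_iff_isUnit_det _ |>.mp hu)
  have hAdA : Ad * A = 1 := by
    have h2 : (Aᵀ * A) * (Ad * A) = Aᵀ * A := by
      calc (Aᵀ * A) * (Ad * A) = Aᵀ * (A * Ad * A) := by simp [Matrix.mul_assoc]
        _ = Aᵀ * A := by rw [h1]
    calc Ad * A = ((Aᵀ * A)⁻¹ * (Aᵀ * A)) * (Ad * A) := by rw [hinv, one_mul]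
      _ = (Aᵀ * A)⁻¹ * ((Aᵀ * A) * (Ad * A)) := by rw [Matrix.mul_assoc]
      _ = 1 := by rw [h2, hinv]
  have key : (Aᵀ * A) * Ad = Aᵀ := by
    calc (Aᵀ * A) * Ad = Aᵀ * (A * Ad) := by rw [Matrix.mul_assoc]
      _ = Aᵀ * (A * Ad)ᵀ := by rw [h3]
      _ = Aᵀ * (Adᵀ * Aᵀ) := by rw [transpose_mul]
      _ = (Ad * A)ᵀ * Aᵀ := by rw [transpose_mul, Matrix.mul_assoc]
      _ = Aᵀ := by rw [hAdA, transpose_one, Matrix.one_mul]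
  calc Ad = ((Aᵀ * A)⁻¹ * (Aᵀ * A)) * Ad := by rw [hinv, Matrix.one_mul]
    _ = (Aᵀ * A)⁻¹ * ((Aᵀ * A) * Ad) := by rw [Matrix.mul_assoc]
    _ = (Aᵀ * A)⁻¹ * Aᵀ := by rw [key]

/-- Pseudoinverse update formula (main theorem). -/
theorem pinv_update_formula {m n r : ℕ} (hmn : n ≤ m) (hnr : r ≤ n)
    (A : Matrix (Fin m) (Fin n) ℝ) (U : Matrix (Fin m) (Fin r) ℝ)
    (V : Matrix (Fin n) (Fin r) ℝ)
    (hA : A.rank = n) (hAhat : (A + U * Vᵀ).rank = n)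
    (Ad : Matrix (Fin n) (Fin m) ℝ) (hAd : IsMoorePenrose A Ad)
    (Bd : Matrix (Fin n) (Fin m) ℝ) (hBd : IsMoorePenrose (A + U * Vᵀ) Bd)
    (X Y : Matrix (Fin n) (Fin r ⊕ Fin r) ℝ)
    (hX : X = fromCols V (Aᵀ * U))
    (hY : Y = fromCols ((A + U * Vᵀ)ᵀ * U) V)
    (M : Matrix (Fin n) (Fin n) ℝ)
    (hM : M = (Aᵀ * A)⁻¹ * X *
      ((1 : Matrix (Fin r ⊕ Fin r) (Fin r ⊕ Fin r) ℝ) + Yᵀ * (Aᵀ * A)⁻¹ * X)⁻¹ * Yᵀ) :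
    Bd = Ad - M * Ad + (1 - M) * (Aᵀ * A)⁻¹ * V * Uᵀ := by
  set Ah := A + U * Vᵀ with hAh
  -- invertibility of the Gram matrices
  have hG : IsUnit (Aᵀ * A) := isUnit_of_rank_eq_card _ (by rw [rank_transpose_mul_self, hA])
  have hGh : IsUnit (Ahᵀ * Ah) :=
    isUnit_of_rank_eq_card _ (by rw [rank_transpose_mul_self, hAhat])
  -- explicit forms of the pseudoinverses
  have hAdEq : Ad = (Aᵀ * A)⁻¹ * Aᵀ := pinv_eq_of_isUnit A Ad hG hAd.1 hAd.2.2.1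
  have hBdEq : Bd = (Ahᵀ * Ah)⁻¹ * Ahᵀ := pinv_eq_of_isUnit Ah Bd hGh hBd.1 hBd.2.2.1
  -- key decomposition : Ahᵀ * Ah = AᵀA + X * Yᵀ
  have hXY : X * Yᵀ = V * Uᵀ * Ah + Aᵀ * U * Vᵀ := by
    rw [hX, hY, transpose_fromCols, fromCols_mul_fromRows, transpose_mul,
      transpose_transpose]
    simp [Matrix.mul_assoc]
  have hGram : Ahᵀ * Ah = Aᵀ * A + X * Yᵀ := by
    rw [hXY, hAh]
    simp only [transpose_add, transpose_mul, transpose_transpose, Matrix.add_mul,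
      Matrix.mul_add, Matrix.mul_assoc]
    abel
  have hGinv : (Aᵀ * A)⁻¹ * (Aᵀ * A) = 1 := nonsing_inv_mul _ (isUnit_iff_isUnit_det _ |>.mp hG)
  -- invertibility of the capacitance matrix
  have hCap : IsUnit ((1 : Matrix (Fin r ⊕ Fin r) (Fin r ⊕ Fin r) ℝ) + Yᵀ * (Aᵀ * A)⁻¹ * X) := by
    rw [isUnit_iff_isUnit_det]
    have h1 : ((1 : Matrix (Fin r ⊕ Fin r) (Fin r ⊕ Fin r) ℝ) + Yᵀ * (Aᵀ * A)⁻¹ * X).det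
        = ((1 : Matrix (Fin n) (Fin n) ℝ) + (Aᵀ * A)⁻¹ * X * Yᵀ).det := by
      rw [Matrix.mul_assoc, ← Matrix.det_one_add_mul_comm]
    have h2 : (1 : Matrix (Fin n) (Fin n) ℝ) + (Aᵀ * A)⁻¹ * X * Yᵀ
        = (Aᵀ * A)⁻¹ * (Ahᵀ * Ah) := by
      rw [hGram, Matrix.mul_add, hGinv, Matrix.mul_assoc]
    rw [h1, h2, det_mul]
    exact ((isUnit_nonsing_inv_det _ (isUnit_iff_isUnit_det _ |>.mp hG)).mul
      (isUnit_iff_isUnit_det _ |>.mp hGh))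
  -- Woodbury identity
  have hWood : (Ahᵀ * Ah)⁻¹ = (1 - M) * (Aᵀ * A)⁻¹ := by
    have := Matrix.add_mul_mul_inv_eq_sub (Aᵀ * A) X
      (1 : Matrix (Fin r ⊕ Fin r) (Fin r ⊕ Fin r) ℝ) Yᵀ hG isUnit_one (by rwa [inv_one])
    rw [Matrix.mul_one] at this
    rw [hGram, this, inv_one, hM, Matrix.sub_mul, Matrix.one_mul]
  -- conclude
  have hAhT : Ahᵀ = Aᵀ + V * Uᵀ := by
    rw [hAh]; simp [transpose_add, transpose_mul, transpose_transpose]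
  rw [hBdEq, hWood, hAhT, hAdEq]
  simp only [Matrix.sub_mul, Matrix.add_mul, Matrix.mul_add, Matrix.one_mul, Matrix.mul_assoc]
end

section
/- Let A ∈ ℝ^{m×n}, U ∈ ℝ^{m×r}, V ∈ ℝ^{n×r} with rank(A) = rank(A + U Vᵀ) = n, and let b ∈ ℝ^m. With X = [V, AᵀU], Y = [(A + U Vᵀ)ᵀ U, V], Z = (AᵀA)⁻¹ X, Z₁ the first r columns of Z, w = A† b + Z₁ Uᵀ b, and x = w − Z (I_{2r} + Yᵀ Z)⁻¹ Yᵀ w, the vector x equals (A + U Vᵀ)† b, i.e., x is the unique minimizer of ‖b − (A + U Vᵀ) x‖₂. -/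
open Matrix

/-- The Euclidean (ℓ²) norm of a vector in `Fin k → ℝ`. -/
noncomputable def euclNorm {k : ℕ} (v : Fin k → ℝ) : ℝ :=
  ‖(WithLp.equiv 2 (Fin k → ℝ)).symm v‖

/-!
A matrix `A` of full column rank has `AᵀA` invertible, and every Moore–Penrose inverse `B`
satisfies `AᵀAB = Aᵀ`; hence `B = (AᵀA)⁻¹Aᵀ`, and `Bb` solves the normal equations, which makes it
the unique least-squares solution. For `Â = A + UVᵀ` the Gram matrix is the rank-`2r` update
`ÂᵀÂ = AᵀA + XYᵀ`. The Woodbury identity then expresses `(ÂᵀÂ)⁻¹` through `(AᵀA)⁻¹` and the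
capacitance matrix `I + YᵀZ`, invertible by Sylvester's determinant identity, and since
`w = (AᵀA)⁻¹Âᵀb` the algorithm's `x` is exactly `(ÂᵀÂ)⁻¹Âᵀb`.
-/

namespace Matrix

section FullColumnRank

variable {m n K : Type*} [Fintype n] [Field K]

theorem mulVec_injective_of_rank_eq_card (A : Matrix m n K) (hA : A.rank = Fintype.card n) :
    Function.Injective A.mulVec := by
  have hker := LinearMap.finrank_range_add_finrank_ker A.mulVecLin
  rw [← rank, hA, Module.finrank_fintype_fun_eq_card, add_eq_left,
    Submodule.finrank_eq_zero] at hker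
  exact LinearMap.ker_eq_bot.mp hker

theorem isUnit_transpose_mul_self_of_rank_eq_card [Fintype m] [DecidableEq n] [LinearOrder K]
    [IsStrictOrderedRing K] (A : Matrix m n K) (hA : A.rank = Fintype.card n) :
    IsUnit (Aᵀ * A) :=
  mulVec_injective_iff_isUnit.mp <|
    mulVec_injective_of_rank_eq_card _ (by rw [rank_transpose_mul_self, hA])

end FullColumnRank

section Woodbury

variable {m n k α : Type*} [Fintype k] [CommRing α]

theorem transpose_mul_self_add_mul_transpose [Fintype m] (A : Matrix m n α) (U : Matrix m k α)
    (V : Matrix n k α) :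
    (A + U * Vᵀ)ᵀ * (A + U * Vᵀ) =
      Aᵀ * A + fromCols V (Aᵀ * U) * (fromCols ((A + U * Vᵀ)ᵀ * U) V)ᵀ := by
  simp only [transpose_fromCols, fromCols_mul_fromRows, transpose_mul, transpose_add,
    transpose_transpose, Matrix.add_mul, Matrix.mul_add, Matrix.mul_assoc]
  abel

variable [Fintype n] [DecidableEq n] [DecidableEq k]

theorem isUnit_one_add_transpose_mul_inv_mul {M : Matrix n n α} (X Y : Matrix n k α)
    (hM : IsUnit M) (hN : IsUnit (M + X * Yᵀ)) : IsUnit (1 + Yᵀ * (M⁻¹ * X)) := by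
  have h : 1 + M⁻¹ * X * Yᵀ = M⁻¹ * (M + X * Yᵀ) := by
    rw [Matrix.mul_add, nonsing_inv_mul M ((isUnit_iff_isUnit_det M).mp hM), Matrix.mul_assoc]
  rw [isUnit_iff_isUnit_det, det_one_add_mul_comm, h, ← isUnit_iff_isUnit_det]
  exact (isUnit_nonsing_inv_iff.mpr hM).mul hN

theorem inv_add_mul_transpose {M : Matrix n n α} (X Y : Matrix n k α)
    (hM : IsUnit M) (hN : IsUnit (M + X * Yᵀ)) :
    (M + X * Yᵀ)⁻¹ = (1 - M⁻¹ * X * (1 + Yᵀ * (M⁻¹ * X))⁻¹ * Yᵀ) * M⁻¹ := by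
  have hS : IsUnit ((1 : Matrix k k α)⁻¹ + Yᵀ * M⁻¹ * X) := by
    simpa only [inv_one, Matrix.mul_assoc] using isUnit_one_add_transpose_mul_inv_mul X Y hM hN
  simpa only [Matrix.mul_assoc, Matrix.sub_mul, Matrix.one_mul, Matrix.mul_one, inv_one] using
    add_mul_mul_inv_eq_sub M X 1 Yᵀ hM isUnit_one hS

end Woodbury

end Matrix

section MoorePenrose

variable {m n : ℕ} {A : Matrix (Fin m) (Fin n) ℝ} {B : Matrix (Fin n) (Fin m) ℝ}

theorem IsMoorePenrose.transpose_mul_self_mul (h : IsMoorePenrose A B) : Aᵀ * A * B = Aᵀ := by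
  obtain ⟨hABA, -, hAB, -⟩ := h
  rw [Matrix.mul_assoc, ← hAB, ← transpose_mul, hABA]

theorem IsMoorePenrose.eq_of_rank_eq (h : IsMoorePenrose A B) (hA : A.rank = n) :
    B = (Aᵀ * A)⁻¹ * Aᵀ := by
  have hM := isUnit_transpose_mul_self_of_rank_eq_card A (by rw [hA, Fintype.card_fin])
  calc B = (Aᵀ * A)⁻¹ * (Aᵀ * A * B) :=
        (nonsing_inv_mul_cancel_left _ _ ((isUnit_iff_isUnit_det _).mp hM)).symm
    _ = (Aᵀ * A)⁻¹ * Aᵀ := by rw [h.transpose_mul_self_mul]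

end MoorePenrose

theorem euclNorm_nonneg {k : ℕ} (v : Fin k → ℝ) : 0 ≤ euclNorm v :=
  norm_nonneg _

theorem euclNorm_sq {k : ℕ} (v : Fin k → ℝ) : euclNorm v ^ 2 = v ⬝ᵥ v := by
  rw [euclNorm, EuclideanSpace.norm_sq_eq]
  simp [dotProduct, sq]

section LeastSquares

variable {m n : ℕ} (A : Matrix (Fin m) (Fin n) ℝ) (b : Fin m → ℝ) {x : Fin n → ℝ}

theorem euclNorm_sub_mulVec_sq (hx : Aᵀ *ᵥ (b - A *ᵥ x) = 0) (y : Fin n → ℝ) :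
    euclNorm (b - A *ᵥ y) ^ 2 = euclNorm (b - A *ᵥ x) ^ 2 + euclNorm (A *ᵥ (x - y)) ^ 2 := by
  have hperp : (b - A *ᵥ x) ⬝ᵥ (A *ᵥ (x - y)) = 0 := by
    rw [dotProduct_mulVec, ← mulVec_transpose, hx, zero_dotProduct]
  have hsplit : b - A *ᵥ y = (b - A *ᵥ x) + A *ᵥ (x - y) := by
    rw [mulVec_sub]; abel
  rw [euclNorm_sq, euclNorm_sq, euclNorm_sq, hsplit, add_dotProduct, dotProduct_add,
    dotProduct_add, hperp, dotProduct_comm (A *ᵥ _), hperp]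
  ring

theorem euclNorm_sub_mulVec_le_of_normal_eq (hx : Aᵀ *ᵥ (b - A *ᵥ x) = 0) (y : Fin n → ℝ) :
    euclNorm (b - A *ᵥ x) ≤ euclNorm (b - A *ᵥ y) := by
  rw [← sq_le_sq₀ (euclNorm_nonneg _) (euclNorm_nonneg _), euclNorm_sub_mulVec_sq A b hx y]
  exact le_add_of_nonneg_right (sq_nonneg _)

theorem eq_of_euclNorm_sub_mulVec_eq_of_normal_eq (hA : Function.Injective A.mulVec)
    (hx : Aᵀ *ᵥ (b - A *ᵥ x) = 0) {y : Fin n → ℝ}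
    (hy : euclNorm (b - A *ᵥ y) = euclNorm (b - A *ᵥ x)) : y = x := by
  have hzero : euclNorm (A *ᵥ (x - y)) ^ 2 = 0 := by
    simpa [hy] using euclNorm_sub_mulVec_sq A b hx y
  rw [euclNorm_sq, dotProduct_self_eq_zero, mulVec_sub, sub_eq_zero] at hzero
  exact (hA hzero).symm

end LeastSquares

/-- Correctness of Algorithm WoodburyLS. -/
theorem woodburyLS_correct {m n r : ℕ}
    (A : Matrix (Fin m) (Fin n) ℝ) (U : Matrix (Fin m) (Fin r) ℝ)
    (V : Matrix (Fin n) (Fin r) ℝ)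
    (hA : A.rank = n) (hAhat : (A + U * Vᵀ).rank = n)
    (b : Fin m → ℝ)
    (Ad : Matrix (Fin n) (Fin m) ℝ) (hAd : IsMoorePenrose A Ad)
    (Bd : Matrix (Fin n) (Fin m) ℝ) (hBd : IsMoorePenrose (A + U * Vᵀ) Bd)
    (X Y Z : Matrix (Fin n) (Fin r ⊕ Fin r) ℝ)
    (hX : X = fromCols V (Aᵀ * U))
    (hY : Y = fromCols ((A + U * Vᵀ)ᵀ * U) V)
    (hZ : Z = (Aᵀ * A)⁻¹ * X)
    (Z₁ : Matrix (Fin n) (Fin r) ℝ) (hZ₁ : Z₁ = Z.submatrix id Sum.inl)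
    (w x : Fin n → ℝ)
    (hw : w = Ad *ᵥ b + Z₁ *ᵥ (Uᵀ *ᵥ b))
    (hx : x = w - (Z * ((1 : Matrix (Fin r ⊕ Fin r) (Fin r ⊕ Fin r) ℝ) + Yᵀ * Z)⁻¹ * Yᵀ) *ᵥ w) :
    x = Bd *ᵥ b ∧
      (∀ y : Fin n → ℝ,
        euclNorm (b - (A + U * Vᵀ) *ᵥ x) ≤ euclNorm (b - (A + U * Vᵀ) *ᵥ y)) ∧
      ∀ y : Fin n → ℝ,
        euclNorm (b - (A + U * Vᵀ) *ᵥ y) = euclNorm (b - (A + U * Vᵀ) *ᵥ x) → y = x := by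
  set Ah := A + U * Vᵀ
  have hA' : A.rank = Fintype.card (Fin n) := by rw [hA, Fintype.card_fin]
  have hAh' : Ah.rank = Fintype.card (Fin n) := by rw [hAhat, Fintype.card_fin]
  have hgram : Ahᵀ * Ah = Aᵀ * A + X * Yᵀ := by
    rw [hX, hY]; exact transpose_mul_self_add_mul_transpose A U V
  have hw' : w = ((Aᵀ * A)⁻¹ * Ahᵀ) *ᵥ b := by
    have hZ₁' : Z₁ = (Aᵀ * A)⁻¹ * V := by rw [hZ₁, hZ, hX, mul_fromCols]; rfl
    have hAhT : Ahᵀ = Aᵀ + V * Uᵀ := by rw [transpose_add, transpose_mul, transpose_transpose]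
    rw [hw, hZ₁', hAd.eq_of_rank_eq hA, mulVec_mulVec, ← add_mulVec, Matrix.mul_assoc _ V,
      ← Matrix.mul_add, hAhT]
  have hxBd : x = Bd *ᵥ b := by
    rw [hx, hw', mulVec_mulVec, ← sub_mulVec, hBd.eq_of_rank_eq hAhat, hgram,
      inv_add_mul_transpose X Y (isUnit_transpose_mul_self_of_rank_eq_card A hA')
        (hgram ▸ isUnit_transpose_mul_self_of_rank_eq_card Ah hAh'), hZ]
    simp only [Matrix.sub_mul, Matrix.one_mul, Matrix.mul_assoc]
  have hnormal : Ahᵀ *ᵥ (b - Ah *ᵥ x) = 0 := by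
    rw [hxBd, mulVec_sub, mulVec_mulVec, mulVec_mulVec, hBd.transpose_mul_self_mul, sub_self]
  exact ⟨hxBd, euclNorm_sub_mulVec_le_of_normal_eq Ah b hnormal,
    fun y => eq_of_euclNorm_sub_mulVec_eq_of_normal_eq Ah b
      (mulVec_injective_of_rank_eq_card Ah hAh') hnormal⟩
end
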